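/- arXiv:1003.4716 — 2 statements merged into one kernel-verified Lean document; each statement's English description precedes it below -/
import Mathlib

section
/- Suppose f : ℝ → EReal is k-convex, r is an r-function, and max(r*(φ), f(φ)) < +∞ for some φ > 0. Then for every real a < speedp(cv(r, f*)), one has cv(r, f*)(a) = inf {λ·r(b) + (1−λ)·f*(c) : λ ∈ [0,1], b, c ∈ ℝ, λ·b + (1−λ)·c = a, λ·r(b) + (1−λ)·f*(c) < 0, and r(b) < 0}. -/
open Set Filter Topology

noncomputable section

/-- `f : ℝ → EReal` is convex iff its epigraph is a convex set. -/
def EConvex (f : ℝ → EReal) : Prop :=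
  Convex ℝ {p : ℝ × ℝ | f p.1 ≤ (p.2 : EReal)}

/-- The Fenchel dual `f*(a) = sup_θ (θ·a − f(θ))`. -/
def Fd (f : ℝ → EReal) : ℝ → EReal :=
  fun a => ⨆ θ : ℝ, ((θ * a : ℝ) : EReal) - f θ

/-- The sweep `f°`: strictly positive values are swept to `+∞`. -/
def sweep (f : ℝ → EReal) : ℝ → EReal :=
  fun a => if f a ≤ 0 then f a else ⊤

/-- `speedp f = inf {a | f a > 0}`, as an extended real. -/
def speedp (f : ℝ → EReal) : EReal :=
  sInf ((fun a : ℝ => (a : EReal)) '' {a : ℝ | 0 < f a})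

/-- k-convex functions. -/
def KConvex (f : ℝ → EReal) : Prop :=
  EConvex f ∧ (∃ θ : ℝ, 0 < θ ∧ f θ < ⊤) ∧ (∀ θ : ℝ, θ < 0 → f θ = ⊤)

/-- The closure `cl f`: the greatest lower semicontinuous function beneath `f`. -/
def ecl (f : ℝ → EReal) : ℝ → EReal :=
  fun x => ⨆ g : {g : ℝ → EReal // LowerSemicontinuous g ∧ ∀ y, g y ≤ f y}, g.1 x

/-- r-functions: increasing, convex, somewhere in `(−∞,0)`, left continuous,
and `+∞` whenever strictly positive. -/
def RFunction (r : ℝ → EReal) : Prop :=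
  Monotone r ∧ EConvex r ∧ (∃ a : ℝ, ⊥ < r a ∧ r a < 0) ∧
    (∀ a : ℝ, ContinuousWithinAt r (Set.Iio a) a) ∧
    (∀ a : ℝ, 0 < r a → r a = ⊤)

/-- The greatest lower semicontinuous convex function beneath `f` and `g`. -/
def cv (f g : ℝ → EReal) : ℝ → EReal :=
  fun x => ⨆ h : {h : ℝ → EReal //
    LowerSemicontinuous h ∧ EConvex h ∧ (∀ y, h y ≤ f y) ∧ (∀ y, h y ≤ g y)}, h.1 x

/-- `enat f`: the pointwise sup of convex minorants `g` of `f` with `g θ / θ`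
antitone on `(0,∞)`. -/
def enat (f : ℝ → EReal) : ℝ → EReal :=
  fun x => ⨆ g : {g : ℝ → EReal // EConvex g ∧ (∀ y, g y ≤ f y) ∧
      AntitoneOn (fun θ : ℝ => g θ * ((θ⁻¹ : ℝ) : EReal)) (Set.Ioi 0)}, g.1 x

/-- `varthetapp f = sup {θ | f θ = enat f θ}`. -/
def varthetapp (f : ℝ → EReal) : EReal :=
  sSup ((fun θ : ℝ => (θ : EReal)) '' {θ : ℝ | f θ = enat f θ})

/-- `flt f = ((f*)°)*`. -/
def flt (f : ℝ → EReal) : ℝ → EReal := Fd (sweep (Fd f))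

/-- The set where `f` is finite. -/
def Phi (f : ℝ → EReal) : Set ℝ := {θ : ℝ | f θ < ⊤}

/-- `A⁺`: points in `A` or above a point of `A`. -/
def plusSet (A : Set ℝ) : Set ℝ := {x : ℝ | ∃ a ∈ A, a ≤ x}

/-- The subdifferential of `f` at `φ`. -/
def esubdiff (f : ℝ → EReal) (φ : ℝ) : Set ℝ :=
  {a : ℝ | ∀ θ : ℝ, f φ + ((a * (θ - φ) : ℝ) : EReal) ≤ f θ}

open Classical in
/-- The convex indicator of a set: `0` on `C` and `+∞` off it. -/
def echi (C : Set ℝ) : ℝ → EReal := fun θ => if θ ∈ C then 0 else ⊤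

/-!
Write `g = f*`. The hypothesis on `φ` gives, by Fenchel–Young, one affine function below both `r`
and `g`, which keeps every quantity above `-∞`.

Every admissible combination dominates `cv r g` at `a`, since `cv r g` is convex and lies below
`r` and `g`. Conversely, let `E` be the convex hull of the epigraph of `r` over `{r < 0}` together
with the epigraph of `g`; its lower boundary over `a` is the infimum of the admissible
combinations. Below `speedp` the point `a` is interior to the shadow of `E` on the first axis, so
`E` has a supporting line touching its lower boundary over `a`. That line lies below `g`, and
below `r` as well: where `r ≥ 0` it is `+∞` except at one zero, a left limit of points where
`r < 0`. Being affine, the line is a closed convex minorant of `r` and `g`, hence lies below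
`cv r g`.
-/

def epi (h : ℝ → EReal) : Set (ℝ × ℝ) := {p | h p.1 ≤ p.2}

lemma econvex_iff {h : ℝ → EReal} : EConvex h ↔ Convex ℝ (epi h) := Iff.rfl

lemma EConvex.apply_comb_le_coe {h : ℝ → EReal} (hh : EConvex h) {x y s t θ : ℝ}
    (hθ : θ ∈ Icc (0 : ℝ) 1) (hx : h x ≤ s) (hy : h y ≤ t) :
    h (θ * x + (1 - θ) * y) ≤ ((θ * s + (1 - θ) * t : ℝ) : EReal) := by
  have hmem := hh (x := (x, s)) (y := (y, t)) hx hy hθ.1 (sub_nonneg.2 hθ.2) (by ring)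
  simpa [smul_eq_mul] using hmem

lemma EConvex.apply_comb_le {h : ℝ → EReal} (hh : EConvex h) (hbot : ∀ x, ⊥ < h x) {l : ℝ}
    (hl : l ∈ Icc (0 : ℝ) 1) (b c : ℝ) :
    h (l * b + (1 - l) * c) ≤ (l : EReal) * h b + ((1 - l : ℝ) : EReal) * h c := by
  obtain ⟨hl0, hl1⟩ := hl
  rcases hl0.eq_or_lt with rfl | hl0
  · simp
  rcases hl1.eq_or_lt with rfl | hl1
  · simp
  have hne_bot : ∀ {μ : ℝ} (x : ℝ), 0 < μ → (μ : EReal) * h x ≠ ⊥ := fun x hμ =>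
    (EReal.mul_ne_bot _ _).2 ⟨.inl (EReal.coe_ne_bot _), .inr (hbot x).ne',
      .inl (EReal.coe_ne_top _), .inl (by exact_mod_cast hμ.le)⟩
  by_cases hbt : h b = ⊤
  · rw [hbt, EReal.coe_mul_top_of_pos hl0, EReal.top_add_of_ne_bot (hne_bot c (by linarith))]
    exact le_top
  by_cases hct : h c = ⊤
  · rw [hct, EReal.coe_mul_top_of_pos (by linarith), EReal.add_top_of_ne_bot (hne_bot b hl0)]
    exact le_top
  rw [← EReal.coe_toReal hbt (hbot b).ne', ← EReal.coe_toReal hct (hbot c).ne']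
  exact_mod_cast hh.apply_comb_le_coe ⟨hl0.le, hl1.le⟩ (EReal.le_coe_toReal hbt)
    (EReal.le_coe_toReal hct)

lemma EConvex.lt_zero_of_mem_Ico {h : ℝ → EReal} (hh : EConvex h) {x y z : ℝ}
    (hx : h x < 0) (hy : h y ≤ 0) (hz : z ∈ Ico x y) : h z < 0 := by
  obtain ⟨s, hxs, hs⟩ := EReal.lt_iff_exists_real_btwn.1 hx
  obtain ⟨hxz, hzy⟩ := hz
  have hyx : 0 < y - x := by linarith
  set θ := (y - z) / (y - x)
  have hθ : θ ∈ Icc (0 : ℝ) 1 :=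
    ⟨div_nonneg (by linarith) hyx.le, (div_le_one hyx).2 (by linarith)⟩
  have hcomb : θ * x + (1 - θ) * y = z := by
    simp only [θ]; field_simp; ring
  have hθpos : 0 < θ := div_pos (by linarith) hyx
  have hs0 : s < 0 := by exact_mod_cast hs
  have := hh.apply_comb_le_coe hθ hxs.le (t := 0) (by simpa using hy)
  rw [hcomb] at this
  exact this.trans_lt (by exact_mod_cast (by nlinarith : θ * s + (1 - θ) * 0 < 0))

lemma econvex_affine (k m : ℝ) : EConvex fun x => ((k * x + m : ℝ) : EReal) := by
  intro p hp q hq a b ha hb hab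
  simp only [mem_ofPred_eq, EReal.coe_le_coe_iff, Prod.fst_add, Prod.snd_add, Prod.smul_fst,
    Prod.smul_snd, smul_eq_mul] at hp hq ⊢
  have hm : m = a * m + b * m := by rw [← add_mul, hab, one_mul]
  nlinarith [mul_le_mul_of_nonneg_left hp ha, mul_le_mul_of_nonneg_left hq hb]

lemma lowerSemicontinuous_affine (k m : ℝ) :
    LowerSemicontinuous fun x : ℝ => ((k * x + m : ℝ) : EReal) :=
  (continuous_coe_real_ereal.comp (by fun_prop)).lowerSemicontinuous

lemma affine_le_of_forall_mem_epi {h : ℝ → EReal} {k m : ℝ}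
    (hℓ : ∀ p ∈ epi h, k * p.1 + m ≤ p.2) (y : ℝ) :
    ((k * y + m : ℝ) : EReal) ≤ h y :=
  EReal.le_of_forall_lt_iff_le.1 fun t ht => by exact_mod_cast hℓ (y, t) ht.le

lemma econvex_iSup {ι : Sort*} {h : ι → ℝ → EReal} (hh : ∀ i, EConvex (h i)) :
    EConvex fun x => ⨆ i, h i x := by
  have hepi : epi (fun x => ⨆ i, h i x) = ⋂ i, epi (h i) := by
    ext p
    simp [epi, iSup_le_iff]
  rw [econvex_iff]
  exact hepi ▸ convex_iInter hh

lemma econvex_coe_mul_sub (θ : ℝ) (c : EReal) : EConvex fun x => ((θ * x : ℝ) : EReal) - c := by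
  induction c using EReal.rec with
  | bot =>
    have hepi : epi (fun x => ((θ * x : ℝ) : EReal) - ⊥) = ∅ := by
      ext p
      simp only [epi, mem_ofPred_eq, EReal.sub_bot (EReal.coe_ne_bot _), top_le_iff,
        EReal.coe_ne_top, mem_empty_iff_false]
    rw [econvex_iff]
    exact hepi ▸ convex_empty
  | coe c =>
    have hfun : (fun x => ((θ * x : ℝ) : EReal) - c) = fun x => ((θ * x + -c : ℝ) : EReal) := by
      funext x
      rw [← sub_eq_add_neg, EReal.coe_sub]
    exact hfun ▸ econvex_affine θ (-c)
  | top =>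
    have hepi : epi (fun x => ((θ * x : ℝ) : EReal) - ⊤) = univ := by
      ext p
      simp [epi]
    rw [econvex_iff]
    exact hepi ▸ convex_univ

lemma econvex_Fd (f : ℝ → EReal) : EConvex (Fd f) :=
  econvex_iSup fun θ => econvex_coe_mul_sub θ (f θ)

lemma ConvexOn.exists_affine_le_of_mem_interior {S : Set ℝ} {f : ℝ → ℝ} (hf : ConvexOn ℝ S f)
    {x : ℝ} (hx : x ∈ interior S) : ∃ k : ℝ, ∀ y ∈ S, f x + k * (y - x) ≤ f y := by
  refine ⟨derivWithin f (Ioi x) x, fun y hy => ?_⟩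
  rcases lt_trichotomy y x with hyx | rfl | hxy
  · have hslope := (hf.slope_le_leftDeriv_of_mem_interior hy hx hyx).trans
      (hf.leftDeriv_le_rightDeriv_of_mem_interior hx)
    rw [slope_def_field, div_le_iff₀ (sub_pos.2 hyx)] at hslope
    linarith
  · simp
  · have hslope := hf.rightDeriv_le_slope_of_mem_interior hx hy hxy
    rw [slope_def_field, le_div_iff₀ (sub_pos.2 hxy)] at hslope
    linarith

section Fiber

open scoped Pointwise

variable {E : Set (ℝ × ℝ)} {k₀ m₀ : ℝ}

def fiberInf (E : Set (ℝ × ℝ)) (x : ℝ) : ℝ := sInf {t | (x, t) ∈ E}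

lemma bddBelow_fiber (hlow : ∀ p ∈ E, k₀ * p.1 + m₀ ≤ p.2) (x : ℝ) :
    BddBelow {t | (x, t) ∈ E} :=
  ⟨k₀ * x + m₀, fun _ ht => hlow _ ht⟩

lemma fiberInf_le (hlow : ∀ p ∈ E, k₀ * p.1 + m₀ ≤ p.2) {p : ℝ × ℝ} (hp : p ∈ E) :
    fiberInf E p.1 ≤ p.2 :=
  csInf_le (bddBelow_fiber hlow p.1) hp

lemma convexOn_fiberInf (hE : Convex ℝ E) (hlow : ∀ p ∈ E, k₀ * p.1 + m₀ ≤ p.2) :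
    ConvexOn ℝ (Prod.fst '' E) (fiberInf E) := by
  refine ⟨by simpa using hE.linear_image (LinearMap.fst ℝ ℝ ℝ), ?_⟩
  rintro _ ⟨⟨x, s⟩, hxs, rfl⟩ _ ⟨⟨y, u⟩, hyu, rfl⟩ θ η hθ hη hθη
  have hA : ({t | (x, t) ∈ E} : Set ℝ).Nonempty := ⟨s, hxs⟩
  have hB : ({t | (y, t) ∈ E} : Set ℝ).Nonempty := ⟨u, hyu⟩
  calc fiberInf E (θ • x + η • y)
      ≤ sInf (θ • {t | (x, t) ∈ E} + η • {t | (y, t) ∈ E}) := by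
        refine le_csInf (hA.smul_set.add hB.smul_set) ?_
        rintro _ ⟨_, ⟨s', hs', rfl⟩, _, ⟨u', hu', rfl⟩, rfl⟩
        exact csInf_le (bddBelow_fiber hlow _) (by simpa using hE hs' hu' hθ hη hθη)
    _ = θ • fiberInf E x + η • fiberInf E y := by
        rw [csInf_add hA.smul_set ((bddBelow_fiber hlow x).smul_of_nonneg hθ) hB.smul_set
          ((bddBelow_fiber hlow y).smul_of_nonneg hη), Real.sInf_smul_of_nonneg hθ,
          Real.sInf_smul_of_nonneg hη]
        rfl

theorem Convex.exists_supporting_line (hE : Convex ℝ E) (hlow : ∀ p ∈ E, k₀ * p.1 + m₀ ≤ p.2)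
    {a : ℝ} (ha : a ∈ interior (Prod.fst '' E)) :
    ∃ k m : ℝ, (∀ p ∈ E, k * p.1 + m ≤ p.2) ∧ ∀ z : ℝ, k * a + m < z → ∃ t < z, (a, t) ∈ E := by
  obtain ⟨k, hk⟩ := (convexOn_fiberInf hE hlow).exists_affine_le_of_mem_interior ha
  refine ⟨k, fiberInf E a - k * a, fun p hp => ?_, fun z hz => ?_⟩
  · linarith [hk p.1 ⟨p, hp, rfl⟩, fiberInf_le hlow hp]
  · obtain ⟨⟨a, t⟩, hat, rfl⟩ := interior_subset ha
    obtain ⟨t', hat', ht'z⟩ := exists_lt_of_csInf_lt (s := {t | (a, t) ∈ E}) ⟨t, hat⟩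
      (show fiberInf E a < z by linarith)
    exact ⟨t', ht'z, hat'⟩

end Fiber

lemma affine_le_of_Fd_le {h : ℝ → EReal} {φ M : ℝ} (hM : Fd h φ ≤ M) (y : ℝ) :
    ((φ * y - M : ℝ) : EReal) ≤ h y := by
  have hyoung : ((y * φ : ℝ) : EReal) - h y ≤ M :=
    (le_iSup (fun θ => ((θ * φ : ℝ) : EReal) - h θ) y).trans hM
  rw [EReal.sub_le_iff_le_add (.inr (EReal.coe_ne_top M)) (.inr (EReal.coe_ne_bot M))]
    at hyoung
  rw [EReal.coe_sub, EReal.sub_le_iff_le_add (.inl (EReal.coe_ne_bot M))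
    (.inl (EReal.coe_ne_top M)), add_comm, mul_comm]
  exact hyoung

lemma affine_le_Fd {h : ℝ → EReal} {φ M : ℝ} (hM : h φ ≤ M) (y : ℝ) :
    ((φ * y - M : ℝ) : EReal) ≤ Fd h y :=
  calc ((φ * y - M : ℝ) : EReal) = ((φ * y : ℝ) : EReal) - M := EReal.coe_sub _ _
    _ ≤ ((φ * y : ℝ) : EReal) - h φ := EReal.sub_le_sub le_rfl hM
    _ ≤ Fd h y := le_iSup (fun θ => ((θ * y : ℝ) : EReal) - h θ) φ

section cv

variable {r g : ℝ → EReal}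

lemma cv_le_left (r g : ℝ → EReal) (x : ℝ) : cv r g x ≤ r x :=
  iSup_le fun h => h.2.2.2.1 x

lemma cv_le_right (r g : ℝ → EReal) (x : ℝ) : cv r g x ≤ g x :=
  iSup_le fun h => h.2.2.2.2 x

lemma le_cv {h : ℝ → EReal} (hlsc : LowerSemicontinuous h) (hconv : EConvex h)
    (hr : ∀ y, h y ≤ r y) (hg : ∀ y, h y ≤ g y) (x : ℝ) : h x ≤ cv r g x :=
  le_iSup (fun h : {h : ℝ → EReal //
    LowerSemicontinuous h ∧ EConvex h ∧ (∀ y, h y ≤ r y) ∧ (∀ y, h y ≤ g y)} => h.1 x)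
    ⟨h, hlsc, hconv, hr, hg⟩

lemma econvex_cv (r g : ℝ → EReal) : EConvex (cv r g) :=
  econvex_iSup fun h => h.2.2.1

lemma cv_nonpos_of_lt_speedp {x : ℝ} (hx : (x : EReal) < speedp (cv r g)) : cv r g x ≤ 0 :=
  not_lt.1 fun h => hx.not_ge (sInf_le ⟨x, h, rfl⟩)

lemma cv_lt_zero {a₀ a : ℝ} (hrm : Monotone r) (ha₀ : r a₀ < 0)
    (ha : (a : EReal) < speedp (cv r g)) : cv r g a < 0 := by
  rcases lt_or_ge a a₀ with h | h
  · exact (cv_le_left r g a).trans_lt ((hrm h.le).trans_lt ha₀)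
  · obtain ⟨a', haa', ha'⟩ := EReal.lt_iff_exists_real_btwn.1 ha
    exact (econvex_cv r g).lt_zero_of_mem_Ico ((cv_le_left r g a₀).trans_lt ha₀)
      (cv_nonpos_of_lt_speedp ha') ⟨h, by exact_mod_cast haa'⟩

end cv

section Combinations

variable {r g : ℝ → EReal} {a₀ : ℝ}

def negEpi (r : ℝ → EReal) : Set (ℝ × ℝ) := {p | r p.1 ≤ p.2 ∧ r p.1 < 0}

def negCombs (r g : ℝ → EReal) (a : ℝ) : Set EReal :=
  {v : EReal | ∃ l b c : ℝ, l ∈ Set.Icc (0 : ℝ) 1 ∧ l * b + (1 - l) * c = a ∧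
    v = (l : EReal) * r b + ((1 - l : ℝ) : EReal) * g c ∧ v < 0 ∧ r b < 0}

lemma convex_negEpi (hrm : Monotone r) (hrc : EConvex r) : Convex ℝ (negEpi r) := by
  have hneg : Convex ℝ {p : ℝ × ℝ | r p.1 < 0} := by
    simpa [sep_univ] using ((hrm.monotoneOn univ).convex_lt convex_univ 0).linear_preimage
      (LinearMap.fst ℝ ℝ ℝ)
  exact hrc.inter hneg

lemma mem_negEpi_zero (ha₀ : r a₀ < 0) : (a₀, 0) ∈ negEpi r :=
  ⟨by exact_mod_cast ha₀.le, ha₀⟩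

lemma exists_comb_le_of_mem_convexHull (hrm : Monotone r) (hrc : EConvex r) (hgc : EConvex g)
    (ha₀ : r a₀ < 0) {x t : ℝ} (hxt : (x, t) ∈ convexHull ℝ (negEpi r ∪ epi g)) :
    ∃ l b c : ℝ, l ∈ Icc (0 : ℝ) 1 ∧ l * b + (1 - l) * c = x ∧ r b < 0 ∧
      (l : EReal) * r b + ((1 - l : ℝ) : EReal) * g c ≤ t := by
  rcases (epi g).eq_empty_or_nonempty with hg | hg
  · rw [hg, union_empty, (convex_negEpi hrm hrc).convexHull_eq] at hxt
    exact ⟨1, x, x, ⟨zero_le_one, le_rfl⟩, by ring, hxt.2, by simpa using hxt.1⟩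
  rw [convexHull_union ⟨_, mem_negEpi_zero ha₀⟩ hg, (convex_negEpi hrm hrc).convexHull_eq,
    (econvex_iff.1 hgc).convexHull_eq] at hxt
  obtain ⟨⟨b, s⟩, ⟨hbs, hb⟩, ⟨c, u⟩, hcu, l, η, hl, hη, hlη, hlbc⟩ := mem_convexJoin.1 hxt
  obtain rfl : η = 1 - l := by linarith
  simp only [Prod.smul_mk, Prod.mk_add_mk, smul_eq_mul, Prod.mk.injEq] at hlbc
  refine ⟨l, b, c, ⟨hl, by linarith⟩, hlbc.1, hb, ?_⟩
  rw [← hlbc.2, EReal.coe_add, EReal.coe_mul, EReal.coe_mul]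
  gcongr
  exact hcu

lemma affine_le_of_forall_mem_negEpi (hrm : Monotone r) (hrc : EConvex r) (ha₀ : r a₀ < 0)
    (hsweep : ∀ b, 0 < r b → r b = ⊤) {k m : ℝ} (hℓ : ∀ p ∈ negEpi r, k * p.1 + m ≤ p.2)
    (y : ℝ) : ((k * y + m : ℝ) : EReal) ≤ r y := by
  have hneg : ∀ y, r y < 0 → ((k * y + m : ℝ) : EReal) ≤ r y := fun y hy =>
    EReal.le_of_forall_lt_iff_le.1 fun t ht => by exact_mod_cast hℓ (y, t) ⟨ht.le, hy⟩
  rcases lt_trichotomy (r y) 0 with hy | hy | hy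
  · exact hneg y hy
  · -- `r` is negative just left of a zero, and the line passes to the limit
    have ha₀y : a₀ < y := lt_of_not_ge fun h => (hrm h).not_gt (hy ▸ ha₀)
    have hleft : ∀ y' ∈ Ioo a₀ y, k * y' + m ≤ 0 := fun y' hy' => by
      have hy'neg := hrc.lt_zero_of_mem_Ico ha₀ hy.le ⟨hy'.1.le, hy'.2⟩
      exact_mod_cast (hneg y' hy'neg).trans hy'neg.le
    have hlim : k * y + m ≤ 0 :=
      le_of_tendsto ((Continuous.tendsto (by fun_prop) y).mono_left nhdsWithin_le_nhds)
        (eventually_of_mem (Ioo_mem_nhdsLT ha₀y) hleft)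
    rw [hy]
    exact_mod_cast hlim
  · rw [hsweep y hy]
    exact le_top

lemma affine_le_of_eq_top_of_gt {h : ℝ → EReal} {φ C K a : ℝ}
    (hL : ∀ y, ((φ * y + C : ℝ) : EReal) ≤ h y) (htop : ∀ y, a < y → h y = ⊤) (hK : φ ≤ K)
    (y : ℝ) : ((K * y + (φ * a + C - K * a) : ℝ) : EReal) ≤ h y := by
  rcases le_or_gt y a with hy | hy
  · exact le_trans (by exact_mod_cast (by nlinarith : K * y + (φ * a + C - K * a) ≤ φ * y + C))
      (hL y)
  · rw [htop y hy]
    exact le_top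

lemma exists_gt_neg_or_lt_top (hrm : Monotone r) (hrc : EConvex r) (ha₀ : r a₀ < 0)
    (hsweep : ∀ b, 0 < r b → r b = ⊤) {φ C : ℝ} (hLr : ∀ y, ((φ * y + C : ℝ) : EReal) ≤ r y)
    (hLg : ∀ y, ((φ * y + C : ℝ) : EReal) ≤ g y) {a : ℝ} (ha : (a : EReal) < speedp (cv r g)) :
    ∃ d, a < d ∧ (r d < 0 ∨ g d < ⊤) := by
  by_contra! hcon
  have hrtop : ∀ d, a < d → r d = ⊤ := by
    intro d hd
    rcases (hcon d hd).1.lt_or_eq with hpos | hzero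
    · exact hsweep d hpos
    · have ha₀d : a₀ < d := lt_of_not_ge fun h => (hrm h).not_gt (hzero ▸ ha₀)
      have hmid : max a₀ ((a + d) / 2) ∈ Ico a₀ d :=
        ⟨le_max_left _ _, max_lt ha₀d (by linarith)⟩
      exact absurd (hrc.lt_zero_of_mem_Ico ha₀ hzero.ge hmid)
        (hcon _ (lt_max_of_lt_right (by linarith))).1.not_gt
  obtain ⟨a', hlt, ha'⟩ := EReal.lt_iff_exists_real_btwn.1 ha
  have haa' : a < a' := by exact_mod_cast hlt
  -- a line through `(a, φ a + C)`, steep enough to be `≥ 1` at `a'`, stays below `r` and `g`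
  set K := max φ ((1 - (φ * a + C)) / (a' - a))
  have hφK : φ ≤ K := le_max_left _ _
  have hK : 1 - (φ * a + C) ≤ K * (a' - a) :=
    (div_le_iff₀ (sub_pos.2 haa')).1 (le_max_right _ _)
  have hline := (le_cv (lowerSemicontinuous_affine _ _) (econvex_affine _ _)
    (affine_le_of_eq_top_of_gt hLr hrtop hφK)
    (affine_le_of_eq_top_of_gt hLg (fun d hd => top_le_iff.1 (hcon d hd).2) hφK)
    a').trans (cv_nonpos_of_lt_speedp ha')
  have : K * a' + (φ * a + C - K * a) ≤ 0 := by exact_mod_cast hline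
  linarith

lemma affine_le_of_mem_convexHull {φ C : ℝ} (hLr : ∀ y, ((φ * y + C : ℝ) : EReal) ≤ r y)
    (hLg : ∀ y, ((φ * y + C : ℝ) : EReal) ≤ g y) :
    ∀ p ∈ convexHull ℝ (negEpi r ∪ epi g), φ * p.1 + C ≤ p.2 := by
  have hsub : convexHull ℝ (negEpi r ∪ epi g) ⊆ epi fun x => ((φ * x + C : ℝ) : EReal) :=
    convexHull_min (union_subset (fun p hp => (hLr p.1).trans hp.1) fun p hp => (hLg p.1).trans hp)
      (econvex_affine φ C)
  exact fun p hp => EReal.coe_le_coe_iff.1 (hsub hp)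

lemma mem_interior_fst_convexHull (hrm : Monotone r) (hrc : EConvex r) (ha₀ : r a₀ < 0)
    (hsweep : ∀ b, 0 < r b → r b = ⊤) {φ C : ℝ} (hLr : ∀ y, ((φ * y + C : ℝ) : EReal) ≤ r y)
    (hLg : ∀ y, ((φ * y + C : ℝ) : EReal) ≤ g y) {a : ℝ} (ha : (a : EReal) < speedp (cv r g)) :
    a ∈ interior (Prod.fst '' convexHull ℝ (negEpi r ∪ epi g)) := by
  have hconv : (Prod.fst '' convexHull ℝ (negEpi r ∪ epi g)).OrdConnected := by
    simpa using ((convex_convexHull ℝ _).linear_image (LinearMap.fst ℝ ℝ ℝ)).ordConnected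
  have hmem : ∀ p ∈ negEpi r ∪ epi g, p.1 ∈ Prod.fst '' convexHull ℝ (negEpi r ∪ epi g) :=
    fun p hp => ⟨p, subset_convexHull ℝ _ hp, rfl⟩
  have hleft := hmem (min a₀ (a - 1), 0)
    (.inl ⟨by exact_mod_cast (hrm (min_le_left _ _)).trans ha₀.le,
      (hrm (min_le_left _ _)).trans_lt ha₀⟩)
  obtain ⟨d, had, hd⟩ := exists_gt_neg_or_lt_top hrm hrc ha₀ hsweep hLr hLg ha
  have hright : d ∈ Prod.fst '' convexHull ℝ (negEpi r ∪ epi g) := by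
    rcases hd with hd | hd
    · exact hmem (d, 0) (.inl ⟨by exact_mod_cast hd.le, hd⟩)
    · exact hmem (d, (g d).toReal) (.inr (EReal.le_coe_toReal hd.ne))
  exact mem_interior_iff_mem_nhds.2 (mem_of_superset
    (Icc_mem_nhds ((min_le_right _ _).trans_lt (by linarith)) had) (hconv.out hleft hright))

lemma cv_le_sInf_negCombs {φ C : ℝ} (hLr : ∀ y, ((φ * y + C : ℝ) : EReal) ≤ r y)
    (hLg : ∀ y, ((φ * y + C : ℝ) : EReal) ≤ g y) (a : ℝ) : cv r g a ≤ sInf (negCombs r g a) := by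
  have hbot : ∀ x, ⊥ < cv r g x := fun x => (EReal.bot_lt_coe _).trans_le
    (le_cv (lowerSemicontinuous_affine φ C) (econvex_affine φ C) hLr hLg x)
  refine le_sInf ?_
  rintro _ ⟨l, b, c, hl, rfl, rfl, -, -⟩
  refine ((econvex_cv r g).apply_comb_le hbot hl b c).trans ?_
  gcongr
  · exact_mod_cast hl.1
  · exact cv_le_left r g b
  · exact_mod_cast sub_nonneg.2 hl.2
  · exact cv_le_right r g c

lemma sInf_negCombs_le_cv (hrm : Monotone r) (hrc : EConvex r) (ha₀ : r a₀ < 0)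
    (hsweep : ∀ b, 0 < r b → r b = ⊤) (hgc : EConvex g) {φ C : ℝ}
    (hLr : ∀ y, ((φ * y + C : ℝ) : EReal) ≤ r y) (hLg : ∀ y, ((φ * y + C : ℝ) : EReal) ≤ g y)
    {a : ℝ} (ha : (a : EReal) < speedp (cv r g)) : sInf (negCombs r g a) ≤ cv r g a := by
  obtain ⟨k, m, hsupp, hfib⟩ := (convex_convexHull ℝ _).exists_supporting_line
    (affine_le_of_mem_convexHull hLr hLg)
    (mem_interior_fst_convexHull hrm hrc ha₀ hsweep hLr hLg ha)
  have hℓ : ((k * a + m : ℝ) : EReal) ≤ cv r g a :=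
    le_cv (lowerSemicontinuous_affine k m) (econvex_affine k m)
      (affine_le_of_forall_mem_negEpi hrm hrc ha₀ hsweep
        fun p hp => hsupp p (subset_convexHull ℝ _ (.inl hp)))
      (affine_le_of_forall_mem_epi fun p hp => hsupp p (subset_convexHull ℝ _ (.inr hp))) a
  refine le_of_forall_gt_imp_ge_of_dense fun w hw => ?_
  obtain ⟨z, hz, hzw⟩ := EReal.lt_iff_exists_real_btwn.1 (lt_min hw (cv_lt_zero hrm ha₀ ha))
  obtain ⟨t, htz, hat⟩ := hfib z (by exact_mod_cast hℓ.trans_lt hz)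
  obtain ⟨l, b, c, hl, hlbc, hb, hv⟩ := exists_comb_le_of_mem_convexHull hrm hrc hgc ha₀ hat
  have hvz := hv.trans_lt (EReal.coe_lt_coe_iff.2 htz)
  have hmem : (l : EReal) * r b + ((1 - l : ℝ) : EReal) * g c ∈ negCombs r g a :=
    ⟨l, b, c, hl, hlbc, rfl, hvz.trans (hzw.trans_le (min_le_right _ _)), hb⟩
  exact (sInf_le hmem).trans (hvz.trans (hzw.trans_le (min_le_left _ _))).le

theorem cv_eq_sInf_negCombs (hrm : Monotone r) (hrc : EConvex r) (ha₀ : r a₀ < 0)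
    (hsweep : ∀ b, 0 < r b → r b = ⊤) (hgc : EConvex g) {φ C : ℝ}
    (hLr : ∀ y, ((φ * y + C : ℝ) : EReal) ≤ r y) (hLg : ∀ y, ((φ * y + C : ℝ) : EReal) ≤ g y)
    {a : ℝ} (ha : (a : EReal) < speedp (cv r g)) : cv r g a = sInf (negCombs r g a) :=
  le_antisymm (cv_le_sInf_negCombs hLr hLg a)
    (sInf_negCombs_le_cv hrm hrc ha₀ hsweep hgc hLr hLg ha)

end Combinations

theorem cv_eq_inf_combinations_general (f r : ℝ → EReal) (hr : RFunction r)
    (hfin : ∃ φ : ℝ, 0 < φ ∧ max (Fd r φ) (f φ) < ⊤) :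
    ∀ a : ℝ, (a : EReal) < speedp (cv r (Fd f)) →
      cv r (Fd f) a =
        sInf {v : EReal | ∃ l b c : ℝ, l ∈ Set.Icc (0 : ℝ) 1 ∧
          l * b + (1 - l) * c = a ∧
          v = (l : EReal) * r b + ((1 - l : ℝ) : EReal) * Fd f c ∧
          v < 0 ∧ r b < 0} := by
  obtain ⟨hrm, hrc, ⟨a₀, -, ha₀⟩, -, hsweep⟩ := hr
  obtain ⟨φ, -, hφ⟩ := hfin
  have hM : max (Fd r φ) (f φ) ≤ ((max (Fd r φ) (f φ)).toReal : EReal) :=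
    EReal.le_coe_toReal hφ.ne
  have hLr : ∀ y, ((φ * y + -(max (Fd r φ) (f φ)).toReal : ℝ) : EReal) ≤ r y := fun y => by
    simpa only [sub_eq_add_neg] using affine_le_of_Fd_le ((le_max_left _ _).trans hM) y
  have hLg : ∀ y, ((φ * y + -(max (Fd r φ) (f φ)).toReal : ℝ) : EReal) ≤ Fd f y := fun y => by
    simpa only [sub_eq_add_neg] using affine_le_Fd ((le_max_right _ _).trans hM) y
  exact fun a ha => cv_eq_sInf_negCombs hrm hrc ha₀ hsweep (econvex_Fd f) hLr hLg ha

/-- Lemma `conc maj`: under the conditions of Lemma `s-i good`, for `a` below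
`speedp (cv r f*)`, the value `cv r f*` at `a` is the infimum of
`λ r(b) + (1−λ) f*(c)` over admissible convex combinations with `r(b) < 0`. -/
theorem cv_eq_inf_combinations (f r : ℝ → EReal) (hf : KConvex f) (hr : RFunction r)
    (hfin : ∃ φ : ℝ, 0 < φ ∧ max (Fd r φ) (f φ) < ⊤) :
    ∀ a : ℝ, (a : EReal) < speedp (cv r (Fd f)) →
      cv r (Fd f) a =
        sInf {v : EReal | ∃ l b c : ℝ, l ∈ Set.Icc (0 : ℝ) 1 ∧
          l * b + (1 - l) * c = a ∧
          v = (l : EReal) * r b + ((1 - l : ℝ) : EReal) * Fd f c ∧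
          v < 0 ∧ r b < 0} :=
  cv_eq_inf_combinations_general f r hr hfin
end
end

section
/- Let f : ℝ → EReal be k-convex with speedp(f*) > −∞, let C ⊆ ℝ be a convex set with ψ̄ = sup C satisfying 0 < ψ̄ < +∞, and let χ = χ_C. Assume Φ(nat f) ∩ C ≠ ∅ and nat f is right-continuous at ψ̄. Then nat(nat f + χ)(θ) = (nat f + χ)(θ) for every θ < ψ̄, and nat(nat f + χ)(θ) = θ·(nat f(ψ̄)/ψ̄) for every θ ≥ ψ̄. -/
open Set Filter Topology

noncomputable section

/-!
Write `n = nat f` and let `G = rayExtend (n + χ_{C ∪ {ψ̄}}) ψ̄`: it agrees with `n + χ_C` left of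
`ψ̄` and follows the ray `θ ↦ θ · n(ψ̄)/ψ̄` from `ψ̄` on. As `n(θ)/θ` is antitone, `n` lies above
this ray on `(0, ψ̄]`, hence by convexity on all of `(−∞, ψ̄]`; so `G` is convex and `G(θ)/θ` is
antitone. Right-continuity of `n` at `ψ̄` rules out `n(θ) = −∞` for some `θ > ψ̄` unless
`n(ψ̄) = −∞`, which makes `G` a minorant of `n + χ_C`, whence `G ≤ nat (n + χ_C)`.

Conversely, let `g` be a convex minorant of `n + χ_C` with `g(θ)/θ` antitone. For `ψ ∈ C` below
`ψ̄`, `g(ψ̄) ≤ ψ̄ g(ψ)/ψ ≤ ψ̄ n(ψ)/ψ`, and `limsup_{ψ ↑ ψ̄} n(ψ) ≤ n(ψ̄)` because `n` is convex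
and finite at a point of `C`. Hence `g(ψ̄) ≤ n(ψ̄)`, and then `g ≤ G` beyond `ψ̄` as well.
-/

namespace EReal

lemma coe_mul_mul_coe_inv {c : ℝ} (hc : c ≠ 0) (x : EReal) :
    (c : EReal) * (x * ((c⁻¹ : ℝ) : EReal)) = x := by
  rw [mul_left_comm, ← coe_mul, mul_inv_cancel₀ hc, coe_one, mul_one]

lemma coe_mul_mul_coe_inv' {c : ℝ} (hc : c ≠ 0) (x : EReal) :
    (c : EReal) * x * ((c⁻¹ : ℝ) : EReal) = x := by
  rw [mul_assoc, coe_mul_mul_coe_inv hc]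

lemma mul_coe_inv_le_iff {c : ℝ} (hc : 0 < c) {x y : EReal} :
    x * ((c⁻¹ : ℝ) : EReal) ≤ y ↔ x ≤ c * y := by
  constructor
  · intro h
    rw [← coe_mul_mul_coe_inv hc.ne' x]
    exact mul_le_mul_of_nonneg_left h (EReal.coe_nonneg.2 hc.le)
  · intro h
    rw [← coe_mul_mul_coe_inv' hc.ne' y]
    exact mul_le_mul_of_nonneg_right h (EReal.coe_nonneg.2 (inv_nonneg.2 hc.le))

end EReal

section Echi

variable {D : Set ℝ} {θ : ℝ}

lemma echi_of_mem (h : θ ∈ D) : echi D θ = 0 := by simp [echi, h]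

lemma echi_of_notMem (h : θ ∉ D) : echi D θ = ⊤ := by simp [echi, h]

lemma echi_nonneg (D : Set ℝ) (θ : ℝ) : 0 ≤ echi D θ := by
  by_cases h : θ ∈ D <;> simp [echi, h]

lemma echi_insert_of_ne {p : ℝ} (h : θ ≠ p) : echi (insert p D) θ = echi D θ := by
  by_cases hθ : θ ∈ D <;> simp [echi, hθ, h]

lemma echi_insert_self (p : ℝ) : echi (insert p D) p = 0 := echi_of_mem (mem_insert p D)

lemma add_echi_le_coe_iff {n : ℝ → EReal} {t : ℝ} :
    n θ + echi D θ ≤ t ↔ θ ∈ D ∧ n θ ≤ t ∨ n θ = ⊥ := by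
  by_cases hθ : θ ∈ D
  · rw [echi_of_mem hθ, add_zero]
    constructor
    · exact fun h => Or.inl ⟨hθ, h⟩
    · rintro (⟨-, h⟩ | h) <;> simp [h]
  · rw [echi_of_notMem hθ]
    induction n θ using EReal.rec <;> simp [hθ]

end Echi

lemma Convex.Ico_subset_of_isLUB {C : Set ℝ} {p c : ℝ} (hC : Convex ℝ C) (hp : IsLUB C p)
    (hc : c ∈ C) : Ico c p ⊆ C := fun _ hx =>
  let ⟨_, hdC, hxd, _⟩ := hp.exists_between hx.2
  hC.ordConnected.out hc hdC ⟨hx.1, hxd.le⟩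

lemma Convex.insert_of_isLUB {C : Set ℝ} {p : ℝ} (hC : Convex ℝ C) (hp : IsLUB C p) :
    Convex ℝ (insert p C) := by
  refine (ordConnected_of_Ioo fun x hx y hy hxy => ?_).convex
  have hxC : x ∈ C := hx.resolve_left fun hxp => by
    subst hxp
    rcases hy with rfl | hy
    · exact lt_irrefl _ hxy
    · exact (hp.1 hy).not_gt hxy
  exact fun z hz => Or.inr (hC.Ico_subset_of_isLUB hp hxC
    ⟨hz.1.le, hz.2.trans_le (hy.elim le_of_eq fun h => hp.1 h)⟩)

lemma ConvexOn.econvex {f : ℝ → ℝ} (hf : ConvexOn ℝ univ f) :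
    EConvex (fun θ => (f θ : EReal)) := by
  simpa [EConvex] using hf.convex_epigraph

namespace EConvex

variable {φ : ℝ → EReal}

lemma le_combo (hφ : EConvex φ) {x z a b l m : ℝ} (hx : φ x ≤ a) (hz : φ z ≤ b)
    (hl : 0 ≤ l) (hm : 0 ≤ m) (hlm : l + m = 1) :
    φ (l * x + m * z) ≤ ((l * a + m * b : ℝ) : EReal) := by
  simpa using hφ (x := (x, a)) (y := (z, b)) hx hz hl hm hlm

lemma le_chord (hφ : EConvex φ) {x z a b v : ℝ} (hx : φ x ≤ a) (hz : φ z ≤ b)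
    (hv0 : 0 ≤ v) (hv1 : v ≤ 1) :
    φ (x + v * (z - x)) ≤ ((a + v * (b - a) : ℝ) : EReal) := by
  convert hφ.le_combo hx hz (sub_nonneg.2 hv1) hv0 (sub_add_cancel 1 v) using 2 <;> ring

lemma eq_bot_between (hφ : EConvex φ) {x z v : ℝ} (hx : φ x < ⊤) (hz : φ z = ⊥)
    (hv0 : 0 < v) (hv1 : v ≤ 1) : φ (x + v * (z - x)) = ⊥ := by
  obtain ⟨a, ha⟩ : ∃ a : ℝ, φ x ≤ a := ⟨_, EReal.le_coe_toReal hx.ne⟩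
  refine eq_bot_iff.2 (EReal.le_of_forall_lt_iff_le.1 fun r _ => ?_)
  -- `φ z = ⊥` lies below the value at `z` that makes the chord bound equal to `r`
  convert hφ.le_chord ha (hz.trans_le bot_le : φ z ≤ ((a + (r - a) / v : ℝ) : EReal))
    hv0.le hv1 using 2
  field_simp
  ring

lemma add_echi (hφ : EConvex φ) {D : Set ℝ} (hD : Convex ℝ D) :
    EConvex (fun θ => φ θ + echi D θ) := by
  rintro ⟨x, s⟩ hx ⟨z, t⟩ hz l m hl hm hlm
  simp only [mem_ofPred_eq, Prod.smul_mk, Prod.mk_add_mk, smul_eq_mul] at hx hz ⊢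
  rw [add_echi_le_coe_iff] at hx hz ⊢
  rcases hx with ⟨hxD, hx⟩ | hx
  · rcases hz with ⟨hzD, hz⟩ | hz
    · exact Or.inl ⟨by simpa using hD hxD hzD hl hm hlm, hφ.le_combo hx hz hl hm hlm⟩
    · rcases hm.eq_or_lt with rfl | hm
      · simp_all
      · right
        convert hφ.eq_bot_between (hx.trans_lt (EReal.coe_lt_top _)) hz hm (by linarith) using 2
        rw [show l = 1 - m by linarith]; ring
  · rcases hl.eq_or_lt with rfl | hl
    · simp_all
    · right
      have hzt : φ z < ⊤ :=
        hz.elim (fun h => h.2.trans_lt (EReal.coe_lt_top _)) fun h => h ▸ bot_lt_top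
      convert hφ.eq_bot_between hzt hx hl (by linarith) using 2
      rw [show m = 1 - l by linarith]; ring

lemma of_eqOn_Iio_of_eqOn_Ici (hφ : EConvex φ) {ℓ G : ℝ → EReal} (hℓ : EConvex ℓ) {p : ℝ}
    (hℓφ : ∀ θ < p, ℓ θ ≤ φ θ) (hφℓ : φ p ≤ ℓ p)
    (hGφ : EqOn G φ (Iio p)) (hGℓ : EqOn G ℓ (Ici p)) : EConvex G := by
  rintro ⟨x, s⟩ hx ⟨z, t⟩ hz l m hl hm hlm
  simp only [mem_ofPred_eq, Prod.smul_mk, Prod.mk_add_mk, smul_eq_mul] at hx hz ⊢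
  wlog hxz : x ≤ z generalizing x s z t l m
  · have := this z t hz x s hx hm hl (by linarith) (le_of_not_ge hxz)
    rwa [add_comm (m * z), add_comm (m * t)] at this
  have hy : l * x + m * z = x + m * (z - x) := by rw [show l = 1 - m by linarith]; ring
  by_cases hzp : z < p
  · have hxp : x < p := hxz.trans_lt hzp
    rw [hGφ (show l * x + m * z < p by nlinarith)]
    exact hφ.le_combo (hGφ hxp ▸ hx) (hGφ hzp ▸ hz) hl hm hlm
  have hzℓ : ℓ z ≤ t := hGℓ (not_lt.1 hzp) ▸ hz
  by_cases hxp : x < p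
  swap
  · rw [hGℓ (show p ≤ l * x + m * z by nlinarith)]
    exact hℓ.le_combo (hGℓ (not_lt.1 hxp) ▸ hx) hzℓ hl hm hlm
  have hxφ : φ x ≤ s := hGφ hxp ▸ hx
  have hxℓ : ℓ x ≤ s := (hℓφ x hxp).trans hxφ
  by_cases hyp : l * x + m * z < p
  swap
  · rw [hGℓ (not_lt.1 hyp)]
    exact hℓ.le_combo hxℓ hzℓ hl hm hlm
  rw [hGφ hyp]
  -- the chord from `(x, s)` to `(z, t)` passes above `(p, ℓ p)`, hence above `(p, φ p)`, so it
  -- also lies above `φ` on `[x, p]`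
  have hzx : 0 < z - x := by linarith
  set w := (p - x) / (z - x) with hw
  have hpw : x + w * (z - x) = p := by rw [hw]; field_simp; ring
  have hw0 : 0 < w := div_pos (by linarith) hzx
  have hmw : m < w := by nlinarith
  have hℓp := hℓ.le_chord hxℓ hzℓ hw0.le (by rw [hw, div_le_one hzx]; linarith)
  rw [hpw] at hℓp
  convert hφ.le_chord hxφ (hφℓ.trans hℓp) (div_nonneg hm hw0.le)
    ((div_le_one hw0).2 hmw.le) using 2
  · rw [hy, ← hpw]; field_simp; ring
  · rw [show l = 1 - m by linarith]; field_simp; ring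

lemma eventually_lt_nhdsLT (hφ : EConvex φ) {x p : ℝ} (hxp : x < p) (hx : φ x < ⊤) {z : EReal}
    (hz : φ p < z) : ∀ᶠ y in 𝓝[<] p, φ y < z := by
  obtain ⟨a, ha⟩ : ∃ a : ℝ, φ x ≤ a := ⟨_, EReal.le_coe_toReal hx.ne⟩
  obtain ⟨c, hc, hcz⟩ := EReal.lt_iff_exists_real_btwn.1 hz
  have hpx : p - x ≠ 0 := by linarith
  -- the chord from `(x, a)` to `(p, c)` bounds `φ` on `[x, p]` and tends to `c < z`
  have hchord : Tendsto (fun y : ℝ => ((a + (y - x) / (p - x) * (c - a) : ℝ) : EReal))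
      (𝓝[<] p) (𝓝 c) := by
    have hcont : Continuous fun y : ℝ => ((a + (y - x) / (p - x) * (c - a) : ℝ) : EReal) :=
      continuous_coe_real_ereal.comp (by fun_prop)
    convert (hcont.tendsto p).mono_left nhdsWithin_le_nhds using 3
    rw [div_self hpx]
    ring
  filter_upwards [hchord.eventually_lt_const hcz, Ioo_mem_nhdsLT hxp] with y hyz hy
  refine lt_of_le_of_lt ?_ hyz
  convert hφ.le_chord ha hc.le (v := (y - x) / (p - x))
    (div_nonneg (sub_nonneg.2 hy.1.le) (sub_nonneg.2 hxp.le))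
    ((div_le_one (sub_pos.2 hxp)).2 (by linarith [hy.2])) using 2
  field_simp
  ring

lemma eq_bot_of_continuousWithinAt (hφ : EConvex φ) {x p θ : ℝ} (hxp : x ≤ p) (hx : φ x < ⊤)
    (hpθ : p < θ) (hθ : φ θ = ⊥) (hrc : ContinuousWithinAt φ (Ici p) p) : φ p = ⊥ := by
  have hbot : ∀ᶠ y in 𝓝[>] p, φ y = ⊥ := by
    filter_upwards [Ioo_mem_nhdsGT hpθ] with y hy
    have hθx : 0 < θ - x := by linarith
    convert hφ.eq_bot_between hx hθ (v := (y - x) / (θ - x)) (div_pos (by linarith [hy.1]) hθx)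
      ((div_le_one hθx).2 (by linarith [hy.2])) using 2
    field_simp
    ring
  exact tendsto_nhds_unique (hrc.mono Ioi_subset_Ici_self).tendsto
    (tendsto_const_nhds.congr' (hbot.mono fun _ h => h.symm))

end EConvex

def RatioAntitoneOn (g : ℝ → EReal) (s : Set ℝ) : Prop :=
  AntitoneOn (fun θ : ℝ => g θ * ((θ⁻¹ : ℝ) : EReal)) s

namespace RatioAntitoneOn

variable {g h : ℝ → EReal} {s : Set ℝ}

lemma add (hg : RatioAntitoneOn g s) (hh : RatioAntitoneOn h s) (hs : s ⊆ Ici 0) :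
    RatioAntitoneOn (fun θ => g θ + h θ) s := by
  intro x hx y hy hxy
  have hinv : ∀ θ ∈ s, (0 : EReal) ≤ ((θ⁻¹ : ℝ) : EReal) := fun θ hθ =>
    EReal.coe_nonneg.2 (inv_nonneg.2 (hs hθ))
  simp only [EReal.right_distrib_of_nonneg_of_ne_top (hinv _ hx) (EReal.coe_ne_top _),
    EReal.right_distrib_of_nonneg_of_ne_top (hinv _ hy) (EReal.coe_ne_top _)]
  exact add_le_add (hg hx hy hxy) (hh hx hy hxy)

lemma coe_mul_le {x y : ℝ} (hg : RatioAntitoneOn g s) (hx : x ∈ s) (hy : y ∈ s) (hx0 : 0 < x)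
    (hxy : x ≤ y) : (x : EReal) * (g y * ((y⁻¹ : ℝ) : EReal)) ≤ g x :=
  calc (x : EReal) * (g y * ((y⁻¹ : ℝ) : EReal))
      ≤ x * (g x * ((x⁻¹ : ℝ) : EReal)) :=
        mul_le_mul_of_nonneg_left (hg hx hy hxy) (EReal.coe_nonneg.2 hx0.le)
    _ = g x := EReal.coe_mul_mul_coe_inv hx0.ne' _

lemma le_coe_mul {x y : ℝ} (hg : RatioAntitoneOn g s) (hx : x ∈ s) (hy : y ∈ s) (hy0 : 0 < y)
    (hxy : x ≤ y) : g y ≤ (y : EReal) * (g x * ((x⁻¹ : ℝ) : EReal)) :=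
  calc g y = y * (g y * ((y⁻¹ : ℝ) : EReal)) := (EReal.coe_mul_mul_coe_inv hy0.ne' _).symm
    _ ≤ y * (g x * ((x⁻¹ : ℝ) : EReal)) :=
        mul_le_mul_of_nonneg_left (hg hx hy hxy) (EReal.coe_nonneg.2 hy0.le)

end RatioAntitoneOn

lemma ratioAntitoneOn_echi {D s : Set ℝ} (hs : s ⊆ Ioi 0)
    (hD : ∀ x ∈ s, ∀ y ∈ s, x ≤ y → x ∈ D → y ∈ D) : RatioAntitoneOn (echi D) s := by
  intro x hx y hy hxy
  have hmul : ∀ θ ∈ s, echi D θ * ((θ⁻¹ : ℝ) : EReal) = echi D θ := fun θ hθ => by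
    by_cases h : θ ∈ D
    · rw [echi_of_mem h, zero_mul]
    · rw [echi_of_notMem h, EReal.top_mul_of_pos (EReal.coe_pos.2 (inv_pos.2 (hs hθ)))]
  simp only [hmul x hx, hmul y hy]
  by_cases h : x ∈ D
  · rw [echi_of_mem (hD x hx y hy hxy h)]
    exact echi_nonneg D x
  · rw [echi_of_notMem h]
    exact le_top

section Enat

variable {h g : ℝ → EReal}

lemma le_enat (hg : EConvex g) (hgh : ∀ θ, g θ ≤ h θ) (hgr : RatioAntitoneOn g (Ioi 0))
    (θ : ℝ) : g θ ≤ enat h θ :=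
  le_iSup (fun g : {g : ℝ → EReal // EConvex g ∧ (∀ y, g y ≤ h y) ∧
      AntitoneOn (fun θ : ℝ => g θ * ((θ⁻¹ : ℝ) : EReal)) (Ioi 0)} => g.1 θ) ⟨g, hg, hgh, hgr⟩

lemma enat_le {N : ℝ → EReal}
    (hN : ∀ g, EConvex g → (∀ θ, g θ ≤ h θ) → RatioAntitoneOn g (Ioi 0) → ∀ θ, g θ ≤ N θ)
    (θ : ℝ) : enat h θ ≤ N θ :=
  iSup_le fun g => hN g.1 g.2.1 g.2.2.1 g.2.2.2 θ

lemma econvex_enat (h : ℝ → EReal) : EConvex (enat h) := by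
  have : {q : ℝ × ℝ | enat h q.1 ≤ q.2} =
      ⋂ g : {g : ℝ → EReal // EConvex g ∧ (∀ y, g y ≤ h y) ∧
        AntitoneOn (fun θ : ℝ => g θ * ((θ⁻¹ : ℝ) : EReal)) (Ioi 0)},
        {q : ℝ × ℝ | g.1 q.1 ≤ q.2} := by
    ext q
    simp only [mem_ofPred_eq, mem_iInter, enat, iSup_le_iff]
  rw [EConvex, this]
  exact convex_iInter fun g => g.2.1

lemma ratioAntitoneOn_enat (h : ℝ → EReal) : RatioAntitoneOn (enat h) (Ioi 0) := by
  intro x hx y hy hxy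
  simp only
  rw [EReal.mul_coe_inv_le_iff hy]
  refine iSup_le fun g => ?_
  rw [← EReal.mul_coe_inv_le_iff hy]
  exact (g.2.2.2 hx hy hxy).trans (mul_le_mul_of_nonneg_right (le_enat g.2.1 g.2.2.1 g.2.2.2 x)
    (EReal.coe_nonneg.2 (inv_nonneg.2 (le_of_lt hx))))

end Enat

def rayExtend (φ : ℝ → EReal) (p : ℝ) : ℝ → EReal :=
  fun θ => if θ < p then φ θ else (θ : EReal) * (φ p * ((p⁻¹ : ℝ) : EReal))

section RayExtend

variable {φ : ℝ → EReal} {p θ : ℝ}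

lemma rayExtend_of_lt (h : θ < p) : rayExtend φ p θ = φ θ := if_pos h

lemma rayExtend_of_le (h : p ≤ θ) :
    rayExtend φ p θ = (θ : EReal) * (φ p * ((p⁻¹ : ℝ) : EReal)) := if_neg (not_lt.2 h)

lemma ratioAntitoneOn_rayExtend (hφ : RatioAntitoneOn φ (Ioc 0 p)) (hp : 0 < p) :
    RatioAntitoneOn (rayExtend φ p) (Ioi 0) := by
  have hmin : ∀ θ : ℝ, 0 < θ → rayExtend φ p θ * ((θ⁻¹ : ℝ) : EReal) =
      φ (min θ p) * (((min θ p)⁻¹ : ℝ) : EReal) := fun θ hθ => by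
    rcases lt_or_ge θ p with h | h
    · rw [rayExtend_of_lt h, min_eq_left h.le]
    · rw [rayExtend_of_le h, min_eq_right h, EReal.coe_mul_mul_coe_inv' hθ.ne']
  intro x hx y hy hxy
  simp only [hmin x hx, hmin y hy]
  exact hφ ⟨lt_min hx hp, min_le_right x p⟩ ⟨lt_min hy hp, min_le_right y p⟩
    (min_le_min_right p hxy)

lemma le_rayExtend {g : ℝ → EReal} (hg : RatioAntitoneOn g (Ioi 0)) (hp : 0 < p)
    (hgφ : ∀ θ < p, g θ ≤ φ θ) (hgp : g p ≤ φ p) (θ : ℝ) : g θ ≤ rayExtend φ p θ := by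
  rcases lt_or_ge θ p with h | h
  · exact (hgφ θ h).trans_eq (rayExtend_of_lt h).symm
  · rw [rayExtend_of_le h]
    have hθ : 0 < θ := hp.trans_le h
    exact (hg.le_coe_mul hp hθ hθ h).trans (mul_le_mul_of_nonneg_left
      (mul_le_mul_of_nonneg_right hgp (EReal.coe_nonneg.2 (inv_nonneg.2 hp.le)))
      (EReal.coe_nonneg.2 hθ.le))

end RayExtend

lemma EConvex.coe_mul_le_of_ratioAntitoneOn {φ : ℝ → EReal} {p : ℝ} (hφ : EConvex φ)
    (hr : RatioAntitoneOn φ (Ioc 0 p)) (hp : 0 < p) {b : ℝ} (hb : φ p = b) {θ : ℝ} (hθ : θ ≤ p) :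
    ((θ * (b * p⁻¹) : ℝ) : EReal) ≤ φ θ := by
  have hpos : ∀ x, 0 < x → x ≤ p → ((x * (b * p⁻¹) : ℝ) : EReal) ≤ φ x := fun x hx hxp => by
    simpa only [hb, EReal.coe_mul] using hr.coe_mul_le ⟨hx, hxp⟩ ⟨hp, le_rfl⟩ hx hxp
  rcases lt_or_ge 0 θ with hθ0 | hθ0
  · exact hpos θ hθ0 hθ
  -- for `θ ≤ 0`, a value of `φ θ` below the line would push `φ (p / 2)` below it as well
  by_contra! hlt
  obtain ⟨c, hc, hcθ⟩ := EReal.lt_iff_exists_real_btwn.1 hlt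
  rw [EReal.coe_lt_coe_iff] at hcθ
  have hpθ : 0 < p - θ := by linarith
  obtain ⟨v, hv⟩ : ∃ v, v = (p / 2 - θ) / (p - θ) := ⟨_, rfl⟩
  have hv1 : v < 1 := by rw [hv, div_lt_one hpθ]; linarith
  have hmid : θ + v * (p - θ) = p / 2 := by rw [hv]; field_simp; ring
  have hchord := hφ.le_chord hc.le hb.le (by rw [hv]; exact div_nonneg (by linarith) hpθ.le) hv1.le
  rw [hmid] at hchord
  have hreal := EReal.coe_le_coe_iff.1 ((hpos (p / 2) (by positivity) (by linarith)).trans hchord)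
  have hpb : p * (b * p⁻¹) = b := by field_simp
  have hline : p / 2 * (b * p⁻¹) = (1 - v) * (θ * (b * p⁻¹)) + v * b := by
    linear_combination (-(b * p⁻¹)) * hmid + v * hpb
  linarith [mul_lt_mul_of_pos_left hcθ (sub_pos.2 hv1)]

lemma econvex_rayExtend {φ : ℝ → EReal} {p : ℝ} (hφ : EConvex φ)
    (hr : RatioAntitoneOn φ (Ioc 0 p)) (hp : 0 < p) : EConvex (rayExtend φ p) := by
  have hp' : (0 : EReal) < ((p⁻¹ : ℝ) : EReal) := EReal.coe_pos.2 (inv_pos.2 hp)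
  have hGφ : EqOn (rayExtend φ p) φ (Iio p) := fun θ hθ => rayExtend_of_lt hθ
  induction hb : φ p using EReal.rec with
  | bot =>
    refine hφ.of_eqOn_Iio_of_eqOn_Ici (ℓ := fun _ => ⊥) (by simp [EConvex, convex_univ])
      (fun _ _ => bot_le) hb.le hGφ fun θ hθ => ?_
    rw [rayExtend_of_le hθ, hb, EReal.bot_mul_of_pos hp',
      EReal.coe_mul_bot_of_pos (hp.trans_le hθ)]
  | top =>
    refine hφ.of_eqOn_Iio_of_eqOn_Ici (ℓ := fun θ => if θ < p then ⊥ else ⊤) ?_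
      (fun θ hθ => by simp [hθ]) (by simp) hGφ fun θ hθ => ?_
    · have hepi : {q : ℝ × ℝ | (if q.1 < p then ⊥ else ⊤ : EReal) ≤ q.2} = Prod.fst ⁻¹' Iio p := by
        ext q
        by_cases hq : q.1 < p <;> simp [hq]
      rw [EConvex, hepi]
      exact (convex_Iio p).linear_preimage (LinearMap.fst ℝ ℝ ℝ)
    · rw [rayExtend_of_le hθ, hb, EReal.top_mul_of_pos hp',
        EReal.coe_mul_top_of_pos (hp.trans_le hθ)]
      exact (if_neg (not_lt.2 hθ)).symm
  | coe b =>
    refine hφ.of_eqOn_Iio_of_eqOn_Ici (ℓ := fun θ => ((θ * (b * p⁻¹) : ℝ) : EReal)) ?_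
      (fun θ hθ => hφ.coe_mul_le_of_ratioAntitoneOn hr hp hb hθ.le) ?_ hGφ fun θ hθ => ?_
    · exact ((LinearMap.mulRight ℝ (b * p⁻¹)).convexOn convex_univ).econvex
    · rw [hb, EReal.coe_le_coe_iff]; field_simp; rfl
    · rw [rayExtend_of_le hθ, hb]
      simp only [EReal.coe_mul]

lemma RatioAntitoneOn.le_of_isLUB {g φ : ℝ → EReal} {C : Set ℝ} {p ψ : ℝ}
    (hg : RatioAntitoneOn g (Ioi 0)) (hφ : EConvex φ) (hC : Convex ℝ C) (hp : IsLUB C p)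
    (hp0 : 0 < p) (hψC : ψ ∈ C) (hψ : φ ψ < ⊤) (hgφ : ∀ θ ∈ C, g θ ≤ φ θ) : g p ≤ φ p := by
  by_cases hpC : p ∈ C
  · exact hgφ p hpC
  have hψp : ψ < p := (hp.1 hψC).lt_of_ne fun h => hpC (h ▸ hψC)
  refine EReal.le_of_forall_lt_iff_le.1 fun z hz => ?_
  -- `g p ≤ (p / y) g y ≤ (p / y) z` for `y ∈ C` close to `p`
  have hlim : Tendsto (fun y : ℝ => ((p * (z * y⁻¹) : ℝ) : EReal)) (𝓝[<] p) (𝓝 z) := by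
    have hcont : ContinuousAt (fun y : ℝ => ((p * (z * y⁻¹) : ℝ) : EReal)) p :=
      continuous_coe_real_ereal.continuousAt.comp (by fun_prop (disch := exact hp0.ne'))
    convert hcont.tendsto.mono_left nhdsWithin_le_nhds using 2
    field_simp
  refine ge_of_tendsto hlim ?_
  filter_upwards [hφ.eventually_lt_nhdsLT hψp hψ hz, Ioo_mem_nhdsLT (max_lt hψp hp0)]
    with y hyz hy
  have hy0 : 0 < y := (le_max_right _ _).trans_lt hy.1
  have hyC : y ∈ C := hC.Ico_subset_of_isLUB hp hψC ⟨(le_max_left _ _).trans hy.1.le, hy.2⟩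
  calc g p ≤ p * (g y * ((y⁻¹ : ℝ) : EReal)) := hg.le_coe_mul hy0 hp0 hp0 hy.2.le
    _ ≤ p * (z * ((y⁻¹ : ℝ) : EReal)) :=
        mul_le_mul_of_nonneg_left (mul_le_mul_of_nonneg_right ((hgφ y hyC).trans hyz.le)
          (EReal.coe_nonneg.2 (inv_nonneg.2 hy0.le))) (EReal.coe_nonneg.2 hp0.le)
    _ = ((p * (z * y⁻¹) : ℝ) : EReal) := by simp only [EReal.coe_mul]

section AddEchi

variable {n : ℝ → EReal} {C : Set ℝ} {p ψ : ℝ}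

lemma rayExtend_add_echi_insert_le (hn : EConvex n) (hp : IsLUB C p) (hp0 : 0 < p)
    (hψC : ψ ∈ C) (hψ : n ψ < ⊤) (hrc : ContinuousWithinAt n (Ici p) p) (θ : ℝ) :
    rayExtend (fun x => n x + echi (insert p C) x) p θ ≤ n θ + echi C θ := by
  rcases lt_trichotomy θ p with hθ | rfl | hθ
  · rw [rayExtend_of_lt hθ, echi_insert_of_ne hθ.ne]
  · rw [rayExtend_of_le le_rfl, EReal.coe_mul_mul_coe_inv hp0.ne', echi_insert_self, add_zero]
    exact le_add_of_nonneg_right (echi_nonneg C θ)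
  · rw [echi_of_notMem fun h => (hp.1 h).not_gt hθ]
    by_cases hnθ : n θ = ⊥
    · have hnp : n p = ⊥ := hn.eq_bot_of_continuousWithinAt (hp.1 hψC) hψ hθ hnθ hrc
      rw [rayExtend_of_le hθ.le, echi_insert_self, add_zero, hnp,
        EReal.bot_mul_of_pos (EReal.coe_pos.2 (inv_pos.2 hp0)),
        EReal.coe_mul_bot_of_pos (hp0.trans hθ)]
      exact bot_le
    · rw [EReal.add_top_of_ne_bot hnθ]
      exact le_top

theorem enat_add_echi_eq_rayExtend (hn : EConvex n) (hnr : RatioAntitoneOn n (Ioi 0))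
    (hC : Convex ℝ C) (hp : IsLUB C p) (hp0 : 0 < p) (hψC : ψ ∈ C) (hψ : n ψ < ⊤)
    (hrc : ContinuousWithinAt n (Ici p) p) :
    enat (fun x => n x + echi C x) = rayExtend (fun x => n x + echi (insert p C) x) p := by
  have hφ : EConvex (fun x => n x + echi (insert p C) x) :=
    hn.add_echi (hC.insert_of_isLUB hp)
  have hφr : RatioAntitoneOn (fun x => n x + echi (insert p C) x) (Ioc 0 p) := by
    refine RatioAntitoneOn.add (hnr.mono Ioc_subset_Ioi_self)
      (ratioAntitoneOn_echi Ioc_subset_Ioi_self ?_)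
      (Ioc_subset_Ioi_self.trans Ioi_subset_Ici_self)
    rintro x hx y ⟨-, hyp⟩ hxy (rfl | hxC)
    · exact Or.inl (le_antisymm hyp hxy)
    · rcases hyp.lt_or_eq with hyp | rfl
      · exact Or.inr (hC.Ico_subset_of_isLUB hp hxC ⟨hxy, hyp⟩)
      · exact mem_insert _ _
  funext θ
  refine le_antisymm (enat_le (fun g _ hgn hgr θ => le_rayExtend hgr hp0 ?_ ?_ θ) θ)
    (le_enat (econvex_rayExtend hφ hφr hp0)
      (rayExtend_add_echi_insert_le hn hp hp0 hψC hψ hrc) (ratioAntitoneOn_rayExtend hφr hp0) θ)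
  · exact fun x hx => (hgn x).trans_eq (by rw [echi_insert_of_ne hx.ne])
  · rw [echi_insert_self, add_zero]
    exact hgr.le_of_isLUB hn hC hp hp0 hψC hψ fun x hx =>
      (hgn x).trans_eq (by rw [echi_of_mem hx, add_zero])

end AddEchi

theorem enat_plus_indicator_general (f : ℝ → EReal)
    (C : Set ℝ) (hC : Convex ℝ C) (p : ℝ) (hp : IsLUB C p) (hp0 : 0 < p)
    (hne : (Phi (enat f) ∩ C).Nonempty)
    (hrc : ContinuousWithinAt (enat f) (Set.Ici p) p) :
    (∀ θ : ℝ, θ < p →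
      enat (fun x => enat f x + echi C x) θ = enat f θ + echi C θ) ∧
    (∀ θ : ℝ, p ≤ θ →
      enat (fun x => enat f x + echi C x) θ =
        (θ : EReal) * (enat f p * ((p⁻¹ : ℝ) : EReal))) := by
  obtain ⟨ψ, hψ, hψC⟩ := hne
  rw [enat_add_echi_eq_rayExtend (econvex_enat f) (ratioAntitoneOn_enat f) hC hp hp0 hψC hψ hrc]
  refine ⟨fun θ hθ => ?_, fun θ hθ => ?_⟩
  · rw [rayExtend_of_lt hθ, echi_insert_of_ne hθ.ne]
  · rw [rayExtend_of_le hθ, echi_insert_self, add_zero]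

/-- Lemma `fg agree lemma` (i): the form of `nat (nat f + χ_C)` when
`Φ(nat f) ∩ C ≠ ∅` and `nat f` is right-continuous at `ψ̄ = sup C ∈ (0, ∞)`. -/
theorem enat_plus_indicator (f : ℝ → EReal) (hf : KConvex f)
    (hΓ : ⊥ < speedp (Fd f))
    (C : Set ℝ) (hC : Convex ℝ C) (p : ℝ) (hp : IsLUB C p) (hp0 : 0 < p)
    (hne : (Phi (enat f) ∩ C).Nonempty)
    (hrc : ContinuousWithinAt (enat f) (Set.Ici p) p) :
    (∀ θ : ℝ, θ < p →
      enat (fun x => enat f x + echi C x) θ = enat f θ + echi C θ) ∧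
    (∀ θ : ℝ, p ≤ θ →
      enat (fun x => enat f x + echi C x) θ =
        (θ : EReal) * (enat f p * ((p⁻¹ : ℝ) : EReal))) :=
  enat_plus_indicator_general f C hC p hp hp0 hne hrc
end
end
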